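/- Let X be an exponential vector space, B a basis of X\X₀, and x∈B. Then for any y ∈ (↓x)\X₀, the set (B\{x}) ∪ {y} is also a basis of X\X₀. -/
import Mathlib


/-- An exponential vector space (evs) over a field `K`. -/
class EVS (K : Type*) [Field K] (X : Type*) extends PartialOrder X, AddCommMonoid X, SMul K X where
  add_le_add_right' : ∀ {x y : X}, x ≤ y → ∀ z : X, x + z ≤ y + z
  smul_le_smul' : ∀ {x y : X}, x ≤ y → ∀ α : K, α • x ≤ α • y
  smul_add' : ∀ (α : K) (x y : X), α • (x + y) = α • x + α • y
  mul_smul' : ∀ (α β : K) (x : X), α • (β • x) = (α * β) • x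
  add_smul_le' : ∀ (α β : K) (x : X), (α + β) • x ≤ α • x + β • x
  one_smul' : ∀ x : X, (1 : K) • x = x
  smul_eq_zero_iff' : ∀ (α : K) (x : X), α • x = 0 ↔ α = 0 ∨ x = 0
  primitive_iff' : ∀ x : X, x + (-1 : K) • x = 0 ↔ (∀ y : X, y ≤ x → y = x)
  exists_primitive' : ∀ x : X, ∃ p : X, (∀ y : X, y ≤ p → y = p) ∧ p ≤ x

namespace EVS

variable (K : Type*) [Field K]

/-- The primitive space `X₀`: the set of minimal elements of `X`. -/
def primSpace (X : Type*) [EVS K X] : Set X := {x | ∀ y, y ≤ x → y = x}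

/-- The testing set `L(x)`. -/
def L {X : Type*} [EVS K X] (x : X) : Set X :=
  {z | ∃ α : K, α ≠ 0 ∧ ∃ p ∈ primSpace K X, α • x + p ≤ z}

/-- `B` is a generator of `X ∖ X₀`. -/
def Generates {X : Type*} [EVS K X] (B : Set X) : Prop :=
  B ⊆ (primSpace K X)ᶜ ∧ (primSpace K X)ᶜ = ⋃ x ∈ B, L K x

/-- `B` is an orderly independent subset of `X ∖ X₀`. -/
def OrderlyIndep {X : Type*} [EVS K X] (B : Set X) : Prop :=
  B ⊆ (primSpace K X)ᶜ ∧ ∀ x ∈ B, ∀ y ∈ B, x ≠ y → x ∉ L K y ∧ y ∉ L K x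

/-- `B` is a basis of `X ∖ X₀`. -/
def IsBasis {X : Type*} [EVS K X] (B : Set X) : Prop :=
  OrderlyIndep K B ∧ Generates K B

/-- The feasible set `Q(X)`. -/
def Q (X : Type*) [EVS K X] : Set X :=
  {x | x ∉ primSpace K X ∧ ∀ y, y ≤ x → y ∉ primSpace K X → y ∈ L K x}

/-- An order-isomorphism between two evs over a common field `K`. -/
structure IsOrderIso {X Y : Type*} [EVS K X] [EVS K Y] (φ : X → Y) : Prop where
  bijective : Function.Bijective φ
  map_add : ∀ x y : X, φ (x + y) = φ x + φ y
  map_smul : ∀ (α : K) (x : X), φ (α • x) = α • φ x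
  le_iff : ∀ x y : X, x ≤ y ↔ φ x ≤ φ y

end EVS

section Helpers

open EVS

variable {K X : Type*} [Field K] [EVS K X]

lemma evs_smul_zero (α : K) : α • (0 : X) = 0 := by
  rw [EVS.smul_eq_zero_iff']; right; rfl

lemma evs_prim_iff (p : X) : p ∈ EVS.primSpace K X ↔ p + (-1 : K) • p = 0 := by
  constructor
  · intro h; exact (EVS.primitive_iff' p).mpr h
  · intro h; exact (EVS.primitive_iff' p).mp h

lemma evs_prim_add {p q : X} (hp : p ∈ EVS.primSpace K X) (hq : q ∈ EVS.primSpace K X) :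
    p + q ∈ EVS.primSpace K X := by
  rw [evs_prim_iff (K := K)] at hp hq ⊢
  rw [EVS.smul_add']
  calc p + q + ((-1 : K) • p + (-1 : K) • q)
      = (p + (-1 : K) • p) + (q + (-1 : K) • q) := by abel
    _ = 0 := by rw [hp, hq, add_zero]

lemma evs_prim_smul {α : K} (hα : α ≠ 0) {p : X} (hp : p ∈ EVS.primSpace K X) :
    α • p ∈ EVS.primSpace K X := by
  rw [evs_prim_iff (K := K)] at hp ⊢
  have h1 : (-1 : K) • (α • p) = α • ((-1 : K) • p) := by
    rw [EVS.mul_smul', EVS.mul_smul', mul_comm]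
  rw [h1, ← EVS.smul_add', hp, evs_smul_zero]

lemma evs_L_trans {u v w : X} (h1 : v ∈ EVS.L K u) (h2 : w ∈ EVS.L K v) :
    w ∈ EVS.L K u := by
  obtain ⟨α, hα, p, hp, hle1⟩ := h1
  obtain ⟨β, hβ, q, hq, hle2⟩ := h2
  refine ⟨β * α, mul_ne_zero hβ hα, β • p + q, evs_prim_add (evs_prim_smul hβ hp) hq, ?_⟩
  have h3 : (β * α) • u + (β • p + q) = β • (α • u + p) + q := by
    rw [EVS.smul_add', EVS.mul_smul']; abel
  rw [h3]
  exact le_trans (EVS.add_le_add_right' (EVS.smul_le_smul' hle1 β) q) hle2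

lemma evs_L_subset_compl {w : X} (hw : w ∉ EVS.primSpace K X) :
    EVS.L K w ⊆ (EVS.primSpace K X)ᶜ := by
  rintro z ⟨α, hα, p, hp, hle⟩ hz
  apply hw
  have heq : α • w + p = z := hz _ hle
  rw [evs_prim_iff (K := K)] at hz hp ⊢
  have h1 : (-1 : K) • (α • w + p) = α • ((-1 : K) • w) + (-1 : K) • p := by
    rw [EVS.smul_add', EVS.mul_smul', EVS.mul_smul', mul_comm]
  have h2 : z + (-1 : K) • z = α • (w + (-1 : K) • w) + (p + (-1 : K) • p) := by
    rw [← heq, h1, EVS.smul_add']; exact add_add_add_comm _ _ _ _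
  rw [hp, add_zero] at h2
  have h2 : α • (w + (-1 : K) • w) = 0 := by rw [← h2]; exact hz
  rcases (EVS.smul_eq_zero_iff' α (w + (-1 : K) • w)).mp h2 with h | h
  · exact absurd h hα
  · exact h

lemma evs_mem_L_of_le {B : Set X} (hB : EVS.IsBasis K B) {x : X} (hx : x ∈ B) {z : X}
    (hz : z ∉ EVS.primSpace K X) (hzx : z ≤ x) : z ∈ EVS.L K x := by
  obtain ⟨⟨hBsub, hind⟩, _, hgen⟩ := hB
  have hmem : z ∈ ⋃ b ∈ B, EVS.L K b := by rw [← hgen]; exact hz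
  simp only [Set.mem_iUnion] at hmem
  obtain ⟨b, hb, hzb⟩ := hmem
  by_cases hbx : b = x
  · subst hbx; exact hzb
  · exfalso
    obtain ⟨α, hα, p, hp, hle⟩ := hzb
    have hxLb : x ∈ EVS.L K b := ⟨α, hα, p, hp, le_trans hle hzx⟩
    exact (hind x hx b hb (fun h => hbx h.symm)).1 hxLb

end Helpers

/-- replacing a basis element `x` by any `y ∈ (↓x) ∖ X₀` again gives a basis. -/
theorem stmt_14 {K X : Type*} [Field K] [EVS K X] (B : Set X) (hB : EVS.IsBasis K B)
    (x : X) (hx : x ∈ B) (y : X) (hyx : y ≤ x) (hy : y ∉ EVS.primSpace K X) :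
    EVS.IsBasis K ((B \ {x}) ∪ {y}) := by
  have hBsub : B ⊆ (EVS.primSpace K X)ᶜ := hB.1.1
  have hind := hB.1.2
  have hgen := hB.2.2
  -- y ∈ L x
  have hyLx : y ∈ EVS.L K x := evs_mem_L_of_le hB hx hy hyx
  obtain ⟨α, hα, p, hp, hle⟩ := hyLx
  have hyLx : y ∈ EVS.L K x := ⟨α, hα, p, hp, hle⟩
  -- x ∈ L y
  have hxLy : x ∈ EVS.L K y :=
    ⟨α, hα, p, hp, le_trans (EVS.add_le_add_right' (EVS.smul_le_smul' hyx α) p)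
      (le_trans hle hyx)⟩
  have hsub : (B \ {x}) ∪ {y} ⊆ (EVS.primSpace K X)ᶜ := by
    rintro b (⟨hbB, _⟩ | hb)
    · exact hBsub hbB
    · rw [Set.mem_singleton_iff] at hb; subst hb; exact hy
  refine ⟨⟨hsub, ?_⟩, hsub, ?_⟩
  · -- orderly independence
    rintro a ha b hb hab
    have key : ∀ a ∈ B \ {x}, a ∉ EVS.L K y ∧ y ∉ EVS.L K a := by
      rintro a ⟨haB, hax⟩
      rw [Set.mem_singleton_iff] at hax
      constructor
      · intro h
        exact (hind a haB x hx hax).1 (evs_L_trans hyLx h)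
      · intro h
        exact (hind x hx a haB (fun he => hax he.symm)).1 (evs_L_trans h hxLy)
    rcases ha with ha | ha <;> rcases hb with hb | hb
    · exact hind a ha.1 b hb.1 hab
    · rw [Set.mem_singleton_iff] at hb; subst hb; exact key a ha
    · rw [Set.mem_singleton_iff] at ha; subst ha
      exact ⟨(key b hb).2, (key b hb).1⟩
    · rw [Set.mem_singleton_iff] at ha hb; subst ha; subst hb; exact absurd rfl hab
  · -- generation
    apply Set.eq_of_subset_of_subset
    · intro z hz
      have hmem : z ∈ ⋃ b ∈ B, EVS.L K b := by rw [← hgen]; exact hz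
      simp only [Set.mem_iUnion] at hmem ⊢
      obtain ⟨b, hb, hzb⟩ := hmem
      by_cases hbx : b = x
      · subst hbx
        exact ⟨y, Or.inr rfl, evs_L_trans hxLy hzb⟩
      · exact ⟨b, Or.inl ⟨hb, hbx⟩, hzb⟩
    · intro z hz
      simp only [Set.mem_iUnion] at hz
      obtain ⟨b, hb, hzb⟩ := hz
      exact evs_L_subset_compl (hsub hb) hzb
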